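/- arXiv:1011.1806 — 9 statements merged into one kernel-verified Lean document; each statement's English description precedes it below -/
import Mathlib

section
/- Let A be a commutative ring equipped with a Hasse-Schmidt derivation D = (D_i)_{i≥0}, and let p be a prime ideal of A. Then p_# := {f ∈ A : for all i ≥ 0, D_i(f) ∈ p} is a prime ideal of A which is stable under each D_i. -/
/-- For a Hasse–Schmidt derivation `D` on a commutative ring `A` and a prime ideal `p`,
`p_# = {f | ∀ i, D i f ∈ p}` is a prime ideal stable under each `D i`. -/
theorem stmt2 (A : Type*) [CommRing A] (D : ℕ → A → A)
    (hzero : ∀ f : A, D 0 f = f)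
    (hadd : ∀ (i : ℕ) (f g : A), D i (f + g) = D i f + D i g)
    (hleib : ∀ (i : ℕ) (f g : A),
      D i (f * g) = ∑ kl ∈ Finset.HasAntidiagonal.antidiagonal i, D kl.1 f * D kl.2 g)
    (hiter : ∀ (i j : ℕ) (f : A), D i (D j f) = (i + j).choose i • D (i + j) f)
    (p : Ideal A) (hp : p.IsPrime) :
    ∃ q : Ideal A, (↑q : Set A) = {f : A | ∀ i : ℕ, D i f ∈ p} ∧ q.IsPrime ∧
      ∀ i : ℕ, ∀ f ∈ q, D i f ∈ q := by
  classical
  have hD0 : ∀ i, D i (0 : A) = 0 := by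
    intro i
    have h := hadd i 0 0
    rw [add_zero] at h
    exact (add_eq_left.mp h.symm)
  set q : Ideal A :=
    { carrier := {f : A | ∀ i : ℕ, D i f ∈ p}
      add_mem' := fun hf hg i => by rw [hadd]; exact p.add_mem (hf i) (hg i)
      zero_mem' := fun i => by rw [hD0]; exact p.zero_mem
      smul_mem' := fun a f hf i => by
        rw [smul_eq_mul, hleib]
        exact p.sum_mem fun kl _ => p.mul_mem_left _ (hf kl.2) } with hq
  have hmem : ∀ f : A, f ∈ q ↔ ∀ i : ℕ, D i f ∈ p := fun f => Iff.rfl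
  refine ⟨q, rfl, ⟨?_, ?_⟩, ?_⟩
  · intro h
    have h1 : (1 : A) ∈ q := h ▸ Submodule.mem_top
    exact hp.ne_top (Ideal.eq_top_of_isUnit_mem p (hzero 1 ▸ h1 0) isUnit_one)
  · intro f g hfg
    by_contra h
    push_neg at h
    obtain ⟨hf, hg⟩ := h
    have hf' : ∃ i, D i f ∉ p := by
      by_contra h'; push_neg at h'; exact hf h'
    have hg' : ∃ j, D j g ∉ p := by
      by_contra h'; push_neg at h'; exact hg h'
    set i := Nat.find hf' with hi
    set j := Nat.find hg' with hj
    have hfi : D i f ∉ p := Nat.find_spec hf'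
    have hgj : D j g ∉ p := Nat.find_spec hg'
    have hsum : D (i + j) (f * g) ∈ p := (hmem (f * g)).mp hfg (i + j)
    rw [hleib] at hsum
    have hij : ((i, j) : ℕ × ℕ) ∈ Finset.HasAntidiagonal.antidiagonal (i + j) := by
      simp [Finset.HasAntidiagonal.mem_antidiagonal]
    have hrest : ∑ kl ∈ (Finset.HasAntidiagonal.antidiagonal (i + j)).erase (i, j),
        D kl.1 f * D kl.2 g ∈ p := by
      refine p.sum_mem fun kl hkl => ?_
      obtain ⟨hne, hkl'⟩ := Finset.mem_erase.mp hkl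
      rw [Finset.HasAntidiagonal.mem_antidiagonal] at hkl'
      rcases lt_trichotomy kl.1 i with hlt | heq | hgt
      · exact p.mul_mem_right _ (by_contra fun h => (Nat.find_min hf' hlt) h)
      · exfalso; apply hne
        have : kl.2 = j := by omega
        exact Prod.ext heq this
      · have hlt2 : kl.2 < j := by omega
        exact p.mul_mem_left _ (by_contra fun h => (Nat.find_min hg' hlt2) h)
    rw [← Finset.add_sum_erase _ _ hij] at hsum
    have : D i f * D j g ∈ p := by
      have := p.add_mem hsum (p.neg_mem hrest)
      simpa using this
    rcases hp.mem_or_mem this with h | h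
    · exact hfi h
    · exact hgj h
  · intro i f hf j
    have : D j (D i f) = (j + i).choose j • D (j + i) f := hiter j i f
    rw [this]
    exact nsmul_mem ((hmem f).mp hf (j + i)) _
end

section
/- Let A be a differential ring and θ, a, b ∈ A such that θ·(a'b − ab') = 0. Then for all integers N ≥ 3 and all 0 ≤ i ≤ N, one has b^{N−1}·θ^N·(b^(i)·a^(N−i) − a^(i)·b^(N−i)) = 0, where x^(k) denotes the k-th iterated derivative of x. -/
theorem stmt6 (A : Type*) [CommRing A] (d : Derivation ℤ A A)
    (θ a b : A) (h : θ * (d a * b - a * d b) = 0) :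
    ∀ N : ℕ, 3 ≤ N → ∀ i : ℕ, i ≤ N →
      b ^ (N - 1) * θ ^ N *
        ((⇑d)^[i] b * (⇑d)^[N - i] a - (⇑d)^[i] a * (⇑d)^[N - i] b) = 0 := by
  set W := d a * b - a * d b with hWdef
  -- (1) θ^(m+1) kills the m-th derivative of W
  have hdW : ∀ m : ℕ, θ ^ (m + 1) * (⇑d)^[m] W = 0 := by
    intro m
    induction m with
    | zero => simpa using h
    | succ m ih =>
      have h1 := congrArg (⇑d) ih
      rw [map_zero, d.leibniz, d.leibniz_pow] at h1
      simp only [smul_eq_mul, nsmul_eq_mul, Nat.add_sub_cancel] at h1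
      rw [Function.iterate_succ_apply']
      linear_combination θ * h1 - ((m + 1 : ℕ) : A) * d θ * ih
  -- the ideals I k
  set I : ℕ → Ideal A := fun k => Ideal.span {x : A | ∃ m < k, x = (⇑d)^[m] W} with hIdef
  have hmono : ∀ {k l : ℕ}, k ≤ l → I k ≤ I l := by
    intro k l hkl
    apply Ideal.span_mono
    rintro x ⟨m, hm, rfl⟩
    exact ⟨m, lt_of_lt_of_le hm hkl, rfl⟩
  -- (2) θ^k kills I k
  have hkill : ∀ k : ℕ, ∀ x ∈ I k, θ ^ k * x = 0 := by
    intro k x hx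
    induction hx using Submodule.span_induction with
    | mem x hx =>
      obtain ⟨m, hm, rfl⟩ := hx
      have hsp : θ ^ k = θ ^ (k - (m + 1)) * θ ^ (m + 1) := by
        rw [← pow_add]; congr 1; omega
      rw [hsp, mul_assoc, hdW m, mul_zero]
    | zero => simp
    | add x y hx hy ihx ihy => rw [mul_add, ihx, ihy, add_zero]
    | smul c x hx ihx => rw [smul_eq_mul, mul_left_comm, ihx, mul_zero]
  -- d maps I k into I (k+1)
  have hder : ∀ k : ℕ, ∀ x ∈ I k, d x ∈ I (k + 1) := by
    intro k x hx
    induction hx using Submodule.span_induction with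
    | mem x hx =>
      obtain ⟨m, hm, rfl⟩ := hx
      rw [← Function.iterate_succ_apply' (⇑d) m W]
      exact Ideal.subset_span ⟨m + 1, by omega, rfl⟩
    | zero => simp
    | add x y hx hy ihx ihy => rw [map_add]; exact Ideal.add_mem _ ihx ihy
    | smul c x hx ihx =>
      rw [smul_eq_mul, d.leibniz]
      simp only [smul_eq_mul]
      exact Ideal.add_mem _ (Ideal.mul_mem_left _ _ ihx)
        (Ideal.mul_mem_right _ _ (hmono (Nat.le_succ k) hx))
  have hWmem : ∀ k : ℕ, W ∈ I (k + 1) :=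
    fun k => Ideal.subset_span ⟨0, by omega, by simp⟩
  -- helper for differentiating b^n * x
  have hpow : ∀ (n : ℕ) (x : A),
      b * d (b ^ n * x) = (n : A) * (b ^ n * d b * x) + b ^ (n + 1) * d x := by
    intro n x
    cases n with
    | zero => simp
    | succ m =>
      rw [d.leibniz, d.leibniz_pow]
      simp only [smul_eq_mul, nsmul_eq_mul, Nat.add_sub_cancel]
      push_cast
      ring
  -- (3) b^j * T_{j+1} ∈ I (j+1)
  have hT : ∀ j : ℕ,
      b ^ j * ((⇑d)^[j + 1] a * b - a * (⇑d)^[j + 1] b) ∈ I (j + 1) := by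
    intro j
    induction j with
    | zero =>
      simp only [pow_zero, one_mul, Function.iterate_one]
      exact Ideal.subset_span ⟨0, by omega, by simp [hWdef]⟩
    | succ n ih =>
      have h1 : d (b ^ n * ((⇑d)^[n + 1] a * b - a * (⇑d)^[n + 1] b)) ∈ I (n + 2) :=
        hder (n + 1) _ ih
      have h2 : b ^ n * ((⇑d)^[n + 1] a * b - a * (⇑d)^[n + 1] b) ∈ I (n + 2) :=
        hmono (Nat.le_succ _) ih
      have hdY : d ((⇑d)^[n + 1] a * b - a * (⇑d)^[n + 1] b)
          = ((⇑d)^[n + 2] a * b + (⇑d)^[n + 1] a * d b)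
            - (a * (⇑d)^[n + 2] b + (⇑d)^[n + 1] b * d a) := by
        rw [map_sub, d.leibniz, d.leibniz]
        simp only [smul_eq_mul]
        rw [Function.iterate_succ_apply' d (n + 1) a,
          Function.iterate_succ_apply' d (n + 1) b]
        ring
      have key : b ^ (n + 1) * ((⇑d)^[n + 2] a * b - a * (⇑d)^[n + 2] b)
          = (b * d (b ^ n * ((⇑d)^[n + 1] a * b - a * (⇑d)^[n + 1] b))
             - ((n : A) + 1) * d b * (b ^ n * ((⇑d)^[n + 1] a * b - a * (⇑d)^[n + 1] b)))
            + b ^ n * (⇑d)^[n + 1] b * W := by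
        rw [hpow n _, hdY, hWdef]
        ring
      rw [key]
      exact Ideal.add_mem _
        (Ideal.sub_mem _ (Ideal.mul_mem_left _ _ h1) (Ideal.mul_mem_left _ _ h2))
        (Ideal.mul_mem_left _ _ (hWmem (n + 1)))
  -- final assembly
  intro N hN i hiN
  rcases Nat.eq_zero_or_pos i with hi0 | hipos
  · -- i = 0
    subst hi0
    obtain ⟨M, rfl⟩ : ∃ M, N = M + 1 := ⟨N - 1, by omega⟩
    have hmem : b ^ M * ((⇑d)^[M + 1] a * b - a * (⇑d)^[M + 1] b) ∈ I (M + 1) := hT M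
    have := hkill (M + 1) _ hmem
    simp only [Nat.add_sub_cancel, Nat.sub_zero, Function.iterate_zero_apply]
    linear_combination this
  · rcases eq_or_lt_of_le hiN with hiN' | hiN'
    · -- i = N
      subst hiN'
      obtain ⟨M, rfl⟩ : ∃ M, i = M + 1 := ⟨i - 1, by omega⟩
      have hmem : b ^ M * ((⇑d)^[M + 1] a * b - a * (⇑d)^[M + 1] b) ∈ I (M + 1) := hT M
      have := hkill (M + 1) _ hmem
      simp only [Nat.add_sub_cancel, Nat.sub_self, Function.iterate_zero_apply]
      linear_combination -this
    · -- 0 < i < N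
      obtain ⟨l, rfl⟩ : ∃ l, i = l + 1 := ⟨i - 1, by omega⟩
      obtain ⟨m, hm⟩ : ∃ m, N - (l + 1) = m + 1 := ⟨N - (l + 1) - 1, by omega⟩
      have hNeq : N = m + l + 2 := by omega
      subst hNeq
      rw [show m + l + 2 - 1 = m + l + 1 by omega,
        show m + l + 2 - (l + 1) = m + 1 by omega]
      have h1 : b ^ m * ((⇑d)^[m + 1] a * b - a * (⇑d)^[m + 1] b) ∈ I (m + l + 2) :=
        hmono (by omega) (hT m)
      have h2 : b ^ l * ((⇑d)^[l + 1] a * b - a * (⇑d)^[l + 1] b) ∈ I (m + l + 2) :=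
        hmono (by omega) (hT l)
      have hmem : (⇑d)^[l + 1] b * b ^ l * (b ^ m * ((⇑d)^[m + 1] a * b - a * (⇑d)^[m + 1] b))
          - (⇑d)^[m + 1] b * b ^ m * (b ^ l * ((⇑d)^[l + 1] a * b - a * (⇑d)^[l + 1] b))
          ∈ I (m + l + 2) :=
        Ideal.sub_mem _ (Ideal.mul_mem_left _ _ h1) (Ideal.mul_mem_left _ _ h2)
      have := hkill (m + l + 2) _ hmem
      linear_combination this
end

section
/- Let A be a differential ring and S a multiplicative subset of A. Let a ∈ A and s ∈ S such that the element a/s ∈ S⁻¹A has zero derivative (for the induced derivation on S⁻¹A). If i ∈ ℕ is such that s^(i) ∈ S, then a/s = a^(i)/s^(i) in S⁻¹A. -/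
/-- If `a/s` is a constant of `S⁻¹A` and `s⁽ⁱ⁾ ∈ S`, then `a/s = a⁽ⁱ⁾/s⁽ⁱ⁾` in `S⁻¹A`. -/
theorem stmt7 (A : Type*) [CommRing A] (d : Derivation ℤ A A) (S : Submonoid A)
    (D : Derivation ℤ (Localization S) (Localization S))
    (hD : ∀ a : A, D (algebraMap A (Localization S) a)
            = algebraMap A (Localization S) (d a))
    (a s : A) (hs : s ∈ S)
    (h0 : D (Localization.mk a ⟨s, hs⟩) = 0)
    (i : ℕ) (hsi : (⇑d)^[i] s ∈ S) :
    Localization.mk a ⟨s, hs⟩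
      = Localization.mk ((⇑d)^[i] a) ⟨(⇑d)^[i] s, hsi⟩ := by
  have key : ∀ j : ℕ, Localization.mk a ⟨s, hs⟩
      * algebraMap A (Localization S) ((⇑d)^[j] s)
      = algebraMap A (Localization S) ((⇑d)^[j] a) := by
    intro j
    induction j with
    | zero =>
      simp only [Function.iterate_zero, id_eq]
      rw [← Localization.mk_one_eq_algebraMap, ← Localization.mk_one_eq_algebraMap,
        Localization.mk_mul, Localization.mk_eq_mk_iff, Localization.r_iff_exists]
      exact ⟨1, by push_cast; ring⟩
    | succ n ih =>
      have h := congrArg D ih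
      rw [D.leibniz, h0, smul_zero, add_zero, hD, hD, smul_eq_mul] at h
      rw [Function.iterate_succ_apply', Function.iterate_succ_apply']
      exact h
  have k := key i
  rw [← Localization.mk_one_eq_algebraMap, ← Localization.mk_one_eq_algebraMap,
    Localization.mk_mul, Localization.mk_eq_mk_iff, Localization.r_iff_exists] at k
  obtain ⟨c, hc⟩ := k
  simp only [Submonoid.coe_one, one_mul, Submonoid.coe_mul] at hc
  rw [Localization.mk_eq_mk_iff, Localization.r_iff_exists]
  exact ⟨c, by simpa [mul_comm, mul_left_comm] using hc⟩
end

section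
/- Let A be a differential ring and θ, f ∈ A with θ·f = 0. Then for all n ∈ ℕ, θ^(n)·f^{n+1} = 0, where θ^(n) is the n-th iterated derivative of θ. -/
theorem stmt8 (A : Type*) [CommRing A] (d : Derivation ℤ A A)
    (θ f : A) (h : θ * f = 0) :
    ∀ n : ℕ, (⇑d)^[n] θ * f ^ (n + 1) = 0 := by
  intro n
  induction n with
  | zero => simpa using h
  | succ n ih =>
    have key := congrArg (⇑d) ih
    rw [Derivation.leibniz, Derivation.leibniz_pow, map_zero] at key
    simp only [Nat.add_sub_cancel, smul_eq_mul, nsmul_eq_mul] at key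
    rw [Function.iterate_succ_apply']
    have : d ((⇑d)^[n] θ) * f ^ (n + 1 + 1)
        = -((n+1 : ℕ) * d f) * ((⇑d)^[n] θ * f ^ (n+1)) := by
      linear_combination f * key
    rw [this, ih, mul_zero]
end

section
/- Let A be a differential ring, p a prime ideal of A, and f ∈ A such that f = 0 in the localization A_{p_#}, where p_# = {g ∈ A : all iterated derivatives of g lie in p}. Then there exists n ∈ ℕ such that f^{n+1} = 0 in the localization A_p. -/
/-- Key inductive step: if `s * f = 0` then `d^[k] s * f ^ (k+1) = 0` for all `k`. -/
lemma deriv_pow_zero {A : Type*} [CommRing A] (d : Derivation ℤ A A)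
    (s f : A) (hsf : s * f = 0) : ∀ k : ℕ, (⇑d)^[k] s * f ^ (k + 1) = 0 := by
  intro k
  induction k with
  | zero => simpa using hsf
  | succ k ih =>
    have h1 : d ((⇑d)^[k] s * f ^ (k + 1)) = 0 := by rw [ih, map_zero]
    rw [Derivation.leibniz] at h1
    have h2 : f * ((⇑d)^[k] s • d (f ^ (k + 1)) + f ^ (k + 1) • d ((⇑d)^[k] s)) = 0 := by
      rw [h1, mul_zero]
    rw [Derivation.leibniz_pow] at h2
    simp only [smul_smul, smul_eq_mul, nsmul_eq_mul, Nat.add_sub_cancel] at h2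
    have : (⇑d)^[k + 1] s * f ^ (k + 2) =
        f * ((⇑d)^[k] s * ((k + 1 : ℕ) * (f ^ k * d f)) + f ^ (k + 1) * d ((⇑d)^[k] s))
        - (k + 1 : ℕ) * d f * ((⇑d)^[k] s * f ^ (k + 1)) := by
      rw [Function.iterate_succ_apply']
      ring
    rw [this, h2, ih]
    ring

/-- If `f = 0` in `A_{p_#}` then some power `f^{n+1} = 0` in `A_p`. -/
theorem stmt9 (A : Type*) [CommRing A] (d : Derivation ℤ A A)
    (p q : Ideal A) [p.IsPrime] [q.IsPrime]
    (hq : (↑q : Set A) = {g : A | ∀ n : ℕ, (⇑d)^[n] g ∈ p})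
    (f : A) (h : algebraMap A (Localization.AtPrime q) f = 0) :
    ∃ n : ℕ, (algebraMap A (Localization.AtPrime p) f) ^ (n + 1) = 0 := by
  rw [IsLocalization.map_eq_zero_iff q.primeCompl] at h
  obtain ⟨⟨s, hs⟩, hsf⟩ := h
  -- `s ∉ q`, so some iterated derivative of `s` is not in `p`.
  have hs' : ∃ n : ℕ, (⇑d)^[n] s ∉ p := by
    by_contra hcon
    push_neg at hcon
    exact hs (show s ∈ q by rw [← SetLike.mem_coe, hq]; exact hcon)
  obtain ⟨n, hn⟩ := hs'
  refine ⟨n, ?_⟩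
  have key : (⇑d)^[n] s * f ^ (n + 1) = 0 :=
    deriv_pow_zero d s f (by simpa using hsf) n
  have hunit := IsLocalization.map_units (Localization.AtPrime p)
    (⟨(⇑d)^[n] s, hn⟩ : p.primeCompl)
  have : algebraMap A (Localization.AtPrime p) ((⇑d)^[n] s * f ^ (n + 1)) = 0 := by
    rw [key, map_zero]
  rw [map_mul, map_pow] at this
  exact (hunit.mul_right_eq_zero).mp this
end

section
/- Let A be a differential ring, p a prime ideal of A, and f ∈ A a constant (i.e., f' = 0) such that f = 0 in A_{p_#}. Then f = 0 in A_p. -/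
/-- If `f` is a constant and `f = 0` in `A_{p_#}` then `f = 0` in `A_p`. -/
theorem stmt10 (A : Type*) [CommRing A] (d : Derivation ℤ A A)
    (p q : Ideal A) [p.IsPrime] [q.IsPrime]
    (hq : (↑q : Set A) = {g : A | ∀ n : ℕ, (⇑d)^[n] g ∈ p})
    (f : A) (hf : d f = 0)
    (h : algebraMap A (Localization.AtPrime q) f = 0) :
    algebraMap A (Localization.AtPrime p) f = 0 := by
  rw [IsLocalization.map_eq_zero_iff q.primeCompl] at h
  obtain ⟨⟨s, hs⟩, hsf⟩ := h
  simp only [Submonoid.mk_smul, smul_eq_mul] at hsf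
  -- s ∉ q, so ∃ n, d^[n] s ∉ p
  have hs' : s ∉ {g : A | ∀ n : ℕ, (⇑d)^[n] g ∈ p} := by
    rw [← hq]; exact hs
  simp only [Set.mem_setOf_eq, not_forall] at hs'
  obtain ⟨n, hn⟩ := hs'
  have key : ∀ m : ℕ, (⇑d)^[m] s * f = 0 := by
    intro m
    induction m with
    | zero => simpa using hsf
    | succ k ih =>
      rw [Function.iterate_succ_apply']
      have := congrArg (⇑d) ih
      rw [Derivation.leibniz, map_zero, hf] at this
      simpa [mul_comm] using this
  rw [IsLocalization.map_eq_zero_iff p.primeCompl]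
  exact ⟨⟨(⇑d)^[n] s, hn⟩, by simpa using key n⟩
end

section
/- Let φ : A → B be a morphism of differential rings (Q-algebras) and let p be a prime ideal of B. Then φ⁻¹(p_#) = (φ⁻¹(p))_#, where for a prime q of a differential ring, q_# := {x : all iterated derivatives of x lie in q}. -/
/-- For a morphism of differential ℚ-algebras, `φ⁻¹(p_#) = (φ⁻¹ p)_#`. -/
theorem stmt11 (A B : Type*) [CommRing A] [CommRing B] [Algebra ℚ A] [Algebra ℚ B]
    (dA : Derivation ℚ A A) (dB : Derivation ℚ B B)
    (φ : A →+* B) (hφ : ∀ a : A, φ (dA a) = dB (φ a))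
    (p : Ideal B) (hp : p.IsPrime) :
    φ ⁻¹' {b : B | ∀ n : ℕ, (⇑dB)^[n] b ∈ p}
      = {a : A | ∀ n : ℕ, (⇑dA)^[n] a ∈ Ideal.comap φ p} := by
  have key : ∀ (n : ℕ) (a : A), φ ((⇑dA)^[n] a) = (⇑dB)^[n] (φ a) := by
    intro n
    induction n with
    | zero => intro a; simp
    | succ n ih =>
      intro a
      rw [Function.iterate_succ_apply, Function.iterate_succ_apply, ← hφ, ih]
  ext a
  simp only [Set.mem_preimage, Set.mem_setOf_eq, Ideal.mem_comap, key]
end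

section
/- Let A be a differential Q-algebra. The map Traj : Spec A → diff-Spec A sending a prime p to p_# is continuous, where diff-Spec A (the set of differential prime ideals) carries the topology induced from the Zariski topology on Spec A. Explicitly, for an ideal I of A, the preimage under Traj of the open set (Spec A \ V(I)) ∩ diff-Spec A equals Spec A \ V(⟨I⟩), where ⟨I⟩ is the differential ideal generated by I. -/
section aux

variable {A : Type*} [CommRing A] [Algebra ℚ A] (d : Derivation ℚ A A)

/-- The differential ideal generated by a set `s`. -/
def diffSpan (s : Set A) : Ideal A :=
  Ideal.span {x | ∃ f ∈ s, ∃ n : ℕ, (⇑d)^[n] f = x}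

lemma subset_diffSpan (s : Set A) : s ⊆ (diffSpan d s : Set A) := fun f hf =>
  Ideal.subset_span ⟨f, hf, 0, rfl⟩

lemma diffSpan_dclosed (s : Set A) : ∀ f ∈ diffSpan d s, d f ∈ diffSpan d s := by
  intro f hf
  refine Submodule.span_induction ?_ ?_ ?_ ?_ hf
  · rintro x ⟨g, hg, n, rfl⟩
    exact Ideal.subset_span ⟨g, hg, n + 1, Function.iterate_succ_apply' _ _ _⟩
  · simp
  · intro x y _ _ hx hy
    rw [map_add]; exact add_mem hx hy
  · intro a x hxm hx
    rw [smul_eq_mul, Derivation.leibniz, smul_eq_mul, smul_eq_mul]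
    exact add_mem (Ideal.mul_mem_left _ _ hx) (Ideal.mul_mem_right _ _ hxm)

lemma diffSpan_le (s : Set A) (J : Ideal A) (hJ : ∀ f ∈ J, d f ∈ J)
    (hsJ : s ⊆ (J : Set A)) : diffSpan d s ≤ J := by
  refine Ideal.span_le.2 ?_
  rintro x ⟨g, hg, n, rfl⟩
  induction n with
  | zero => exact hsJ hg
  | succ n ih => rw [Function.iterate_succ_apply']; exact hJ _ ih

end aux

/-- The trajectory map `p ↦ p_#` is continuous, and the preimage of the open set given
by an ideal `I` is the complement of `V(⟨I⟩)`, where `⟨I⟩` is the differential ideal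
generated by `I`. -/
theorem stmt13 (A : Type*) [CommRing A] [Algebra ℚ A] (d : Derivation ℚ A A)
    (Traj : PrimeSpectrum A → PrimeSpectrum A)
    (hTraj : ∀ p : PrimeSpectrum A,
      (↑(Traj p).asIdeal : Set A) = {f : A | ∀ n : ℕ, (⇑d)^[n] f ∈ p.asIdeal}) :
    Continuous Traj ∧
    ∀ I DI : Ideal A, I ≤ DI → (∀ f ∈ DI, d f ∈ DI) →
      (∀ J : Ideal A, (∀ f ∈ J, d f ∈ J) → I ≤ J → DI ≤ J) →
      Traj ⁻¹' (PrimeSpectrum.zeroLocus (I : Set A))ᶜ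
        = (PrimeSpectrum.zeroLocus (DI : Set A))ᶜ := by
  have key : ∀ (s : Set A),
      Traj ⁻¹' PrimeSpectrum.zeroLocus s = PrimeSpectrum.zeroLocus (diffSpan d s) := by
    intro s
    ext p
    simp only [Set.mem_preimage, PrimeSpectrum.mem_zeroLocus]
    constructor
    · intro h
      refine Ideal.span_le.2 ?_
      rintro x ⟨g, hg, n, rfl⟩
      have : g ∈ (↑(Traj p).asIdeal : Set A) := h hg
      rw [hTraj] at this
      exact this n
    · intro h f hf
      have : f ∈ (↑(Traj p).asIdeal : Set A) := by
        rw [hTraj]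
        intro n
        exact h (Ideal.subset_span ⟨f, hf, n, rfl⟩)
      exact this
  constructor
  · have : ∀ Z : Set (PrimeSpectrum A), IsClosed Z → IsClosed (Traj ⁻¹' Z) := by
      intro Z hZ
      obtain ⟨s, rfl⟩ := (PrimeSpectrum.isClosed_iff_zeroLocus Z).1 hZ
      rw [key s]
      exact PrimeSpectrum.isClosed_zeroLocus _
    exact continuous_iff_isClosed.2 this
  · intro I DI hIDI hDcl hmin
    have h1 : diffSpan d (I : Set A) ≤ DI :=
      diffSpan_le d _ DI hDcl hIDI
    have h2 : DI ≤ diffSpan d (I : Set A) :=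
      hmin _ (diffSpan_dclosed d _) (subset_diffSpan d _)
    have hEq : diffSpan d (I : Set A) = DI := le_antisymm h1 h2
    rw [Set.preimage_compl, key, hEq]
end

section
/- Let A be a differential Q-algebra and p a prime ideal of A. Then the set of differential prime ideals q with q ⊆ p has a greatest element (with respect to inclusion), namely p_#. -/
open Finset in
lemma iter_leibniz {A : Type*} [CommRing A] [Algebra ℚ A]
    (d : Derivation ℚ A A) (a b : A) (n : ℕ) :
    (⇑d)^[n] (a * b) =
      ∑ k ∈ Finset.range (n + 1),
        (n.choose k : A) * ((⇑d)^[k] a * (⇑d)^[n - k] b) := by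
  induction n generalizing a b with
  | zero => simp
  | succ n ih =>
    set t : ℕ → A := fun k => (⇑d)^[k] a * (⇑d)^[n + 1 - k] b with ht
    rw [Function.iterate_succ_apply, show d (a*b) = d a * b + a * d b by
      rw [d.leibniz]; simp [smul_eq_mul]; ring]
    rw [iterate_map_add, ih (d a) b, ih a (d b)]
    have h1 : ∑ k ∈ range (n+1), (n.choose k : A) * ((⇑d)^[k] (d a) * (⇑d)^[n-k] b)
        = ∑ k ∈ range (n+1), (n.choose k : A) * t (k+1) := by
      refine Finset.sum_congr rfl fun k hk => ?_
      simp only [Finset.mem_range] at hk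
      rw [← Function.iterate_succ_apply, ht]
      have : n + 1 - (k + 1) = n - k := by omega
      simp [this]
    have h2 : ∑ k ∈ range (n+1), (n.choose k : A) * ((⇑d)^[k] a * (⇑d)^[n-k] (d b))
        = ∑ k ∈ range (n+1), (n.choose k : A) * t k := by
      refine Finset.sum_congr rfl fun k hk => ?_
      simp only [Finset.mem_range] at hk
      rw [← Function.iterate_succ_apply, ht]
      have : (⇑d)^[n-k] (d b) = (⇑d)^[n+1-k] b := by
        rw [← Function.iterate_succ_apply]
        congr 1
        omega
      simp [this]
    rw [h1, h2]
    have goalT : ∑ k ∈ range (n+2), ((n+1).choose k : A) * t k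
        = ∑ k ∈ range (n+1), (n.choose k : A) * t (k+1)
          + ∑ k ∈ range (n+1), (n.choose k : A) * t k := by
      rw [Finset.sum_range_succ' (fun k => ((n+1).choose k : A) * t k)]
      have : ∀ j ∈ range (n+1), ((n+1).choose (j+1) : A) * t (j+1)
          = (n.choose j : A) * t (j+1) + (n.choose (j+1) : A) * t (j+1) := by
        intro j _
        rw [Nat.choose_succ_succ, Nat.cast_add, add_mul]
      rw [Finset.sum_congr rfl this, Finset.sum_add_distrib]
      have h3 : ∑ j ∈ range (n+1), (n.choose (j+1) : A) * t (j+1)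
          + ((n+1).choose 0 : A) * t 0
          = ∑ k ∈ range (n+1), (n.choose k : A) * t k := by
        rw [show ((n+1).choose 0 : A) = (n.choose 0 : A) by simp]
        rw [← Finset.sum_range_succ' (fun k => (n.choose k : A) * t k)]
        rw [Finset.sum_range_succ]
        simp
      rw [add_assoc, h3]
    exact goalT.symm

/-- The set of differential prime ideals contained in `p` has a greatest element, `p_#`. -/
theorem stmt14 (A : Type*) [CommRing A] [Algebra ℚ A]
    (d : Derivation ℚ A A) (p : Ideal A) (hp : p.IsPrime) :
    ∃ q : Ideal A, q.IsPrime ∧ (∀ f ∈ q, d f ∈ q) ∧ q ≤ p ∧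
      (↑q : Set A) = {f : A | ∀ n : ℕ, (⇑d)^[n] f ∈ p} ∧
      ∀ r : Ideal A, r.IsPrime → (∀ f ∈ r, d f ∈ r) → r ≤ p → r ≤ q := by
  set q : Ideal A :=
    { carrier := {f : A | ∀ n : ℕ, (⇑d)^[n] f ∈ p}
      zero_mem' := by intro n; simp
      add_mem' := by
        intro x y hx hy n
        rw [iterate_map_add]
        exact p.add_mem (hx n) (hy n)
      smul_mem' := by
        intro c x hx n
        simp only [smul_eq_mul, Set.mem_setOf_eq]
        rw [iter_leibniz]
        refine p.sum_mem fun k hk => ?_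
        exact Ideal.mul_mem_left _ _ (Ideal.mul_mem_left _ _ (hx _)) } with hq
  have hmemq : ∀ f : A, f ∈ q ↔ ∀ n : ℕ, (⇑d)^[n] f ∈ p := fun f => Iff.rfl
  have hqle : q ≤ p := fun f hf => by simpa using (hmemq f).mp hf 0
  have hqprime : q.IsPrime := by
    constructor
    · intro htop
      have : (1 : A) ∈ q := htop ▸ Submodule.mem_top
      exact hp.ne_top (Ideal.eq_top_of_isUnit_mem _ (hqle this) isUnit_one)
    · intro x y hxy
      rw [or_iff_not_imp_left]
      intro hx
      rw [hmemq] at hx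
      push_neg at hx
      have hex : ∃ m, (⇑d)^[m] x ∉ p := hx
      classical
      set m := Nat.find hex with hm
      have hmspec : (⇑d)^[m] x ∉ p := Nat.find_spec hex
      have hmmin : ∀ k < m, (⇑d)^[k] x ∈ p := fun k hk => by
        by_contra h; exact absurd (Nat.find_le h) (not_le.mpr (hm ▸ hk))
      intro n
      induction n using Nat.strong_induction_on with
      | _ n IH =>
        have htot : (⇑d)^[m + n] (x * y) ∈ p := (hmemq _).mp hxy (m + n)
        rw [iter_leibniz] at htot
        set f : ℕ → A := fun k =>
          ((m+n).choose k : A) * ((⇑d)^[k] x * (⇑d)^[m+n-k] y) with hf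
        have hmmem : m ∈ Finset.range (m + n + 1) := by
          simp
        have hsplit := Finset.add_sum_erase _ f hmmem
        have hrest : ∑ k ∈ (Finset.range (m+n+1)).erase m, f k ∈ p := by
          refine p.sum_mem fun k hk => ?_
          obtain ⟨hkne, hkmem⟩ := Finset.mem_erase.mp hk
          simp only [Finset.mem_range] at hkmem
          rcases lt_or_gt_of_ne hkne with h | h
          · exact Ideal.mul_mem_left _ _ (Ideal.mul_mem_right _ _ (hmmin k h))
          · have : m + n - k < n := by omega
            exact Ideal.mul_mem_left _ _ (Ideal.mul_mem_left _ _ (IH _ this))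
        have hfm : f m ∈ p := by
          have : f m = (∑ k ∈ Finset.range (m+n+1), f k)
              - ∑ k ∈ (Finset.range (m+n+1)).erase m, f k := by
            rw [← hsplit]; ring
          rw [this]
          exact p.sub_mem htot hrest
        have hcunit : IsUnit (((m+n).choose m : A)) := by
          have h0 : (((m+n).choose m : ℚ)) ≠ 0 := by
            exact_mod_cast (Nat.choose_pos (by omega : m ≤ m + n)).ne'
          have := (isUnit_iff_ne_zero.mpr h0).map (algebraMap ℚ A)
          rwa [map_natCast] at this
        have hprod : (⇑d)^[m] x * (⇑d)^[m+n-m] y ∈ p := by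
          rcases hp.mem_or_mem hfm with h | h
          · exact absurd (Ideal.eq_top_of_isUnit_mem _ h hcunit) hp.ne_top
          · exact h
        rcases hp.mem_or_mem hprod with h | h
        · exact absurd h hmspec
        · simpa using h
  refine ⟨q, hqprime, ?_, hqle, rfl, ?_⟩
  · intro f hf n
    rw [← Function.iterate_succ_apply]
    exact (hmemq f).mp hf (n + 1)
  · intro r hr hdr hrp f hf n
    induction n with
    | zero => exact hrp hf
    | succ n ih =>
      have : (⇑d)^[n] f ∈ r := by
        clear ih
        induction n with
        | zero => exact hf
        | succ n ih2 => rw [Function.iterate_succ_apply']; exact hdr _ ih2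
      rw [Function.iterate_succ_apply']
      exact hrp (hdr _ this)
end
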